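/- arXiv:2302.09283 — 2 statements merged into one kernel-verified Lean document; each statement's English description precedes it below -/
import Mathlib

section
/- Let n ≥ 5 be an integer, and let j, k, j', k' be integers with 0 ≤ k, k' ≤ ⌈(n-2)/2⌉. If every edge of S_{n,k,j} is an edge of S_{n,k',j'}, then the escape routes ES(n,k,j) and ES(n,k',j') are equal (so S_{n,k,j} = S_{n,k',j'}). -/
open SimpleGraph

/-- The square cycle `C_n^2`: vertices `ZMod n`, with `u ~ v` iff `u - v ≡ ±1, ±2 (mod n)`. -/
def squareCycle (n : ℕ) : SimpleGraph (ZMod n) :=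
  SimpleGraph.fromRel (fun u v => u - v = 1 ∨ u - v = 2)

/-- The frame `e_i = {v_i, v_{i+1}}`. -/
def frame (n : ℕ) (i : ℤ) : Sym2 (ZMod n) := s(((i : ZMod n)), (((i + 1 : ℤ) : ZMod n)))

/-- The window `f_i = {v_i, v_{i+2}}`. -/
def window (n : ℕ) (i : ℤ) : Sym2 (ZMod n) := s(((i : ZMod n)), (((i + 2 : ℤ) : ZMod n)))

/-- The triangle `T_i = {e_i, e_{i+1}, f_i}`. -/
def triangle (n : ℕ) (i : ℤ) : Set (Sym2 (ZMod n)) :=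
  {frame n i, frame n (i + 1), window n i}

/-- A subgraph of `C_n^2` is convex if for every triangle `T_i`, either at most one of its
edges is in `G` or all three of them are. -/
def IsConvex (n : ℕ) (G : SimpleGraph (ZMod n)) : Prop :=
  ∀ i : ℤ, (triangle n i ∩ G.edgeSet).ncard ≤ 1 ∨ triangle n i ⊆ G.edgeSet

/-- The escape route `ES(n,k,j) = {f_j, f_{j+2k+1}} ∪ {e_{j+1}, …, e_{j+2k+1}}`. -/
def escapeRoute (n : ℕ) (k j : ℤ) : Set (Sym2 (ZMod n)) :=
  {window n j, window n (j + 2 * k + 1)} ∪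
    frame n '' {i : ℤ | j + 1 ≤ i ∧ i ≤ j + 2 * k + 1}

/-- The strip graph with tails `S_{n,k,j}`, obtained from `C_n^2` by deleting the
escape route `ES(n,k,j)`. -/
def stripTails (n : ℕ) (k j : ℤ) : SimpleGraph (ZMod n) :=
  (squareCycle n).deleteEdges (escapeRoute n k j)

/-- A connected spanning subgraph of `C_n^2` is trivial if it is `C_n^2` itself or
(for odd `n`) the subgraph whose edges are all the windows. -/
def IsTrivialSub (n : ℕ) (G : SimpleGraph (ZMod n)) : Prop :=
  G = squareCycle n ∨ (Odd n ∧ G.edgeSet = Set.range (window n))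

/-- The number of spanning trees of `G`, i.e. of subgraphs `H ≤ G` (on the same vertex
set) which are trees. -/
noncomputable def numSpanningTrees {V : Type*} (G : SimpleGraph V) : ℕ :=
  Nat.card {H : SimpleGraph V // H ≤ G ∧ H.IsTree}

/-- The strip graph `S_m`: vertices `1, …, m` (here `Fin m`), with `i ~ j` iff
`1 ≤ |i - j| ≤ 2`. -/
def strip (m : ℕ) : SimpleGraph (Fin m) :=
  SimpleGraph.fromRel (fun i j => (j : ℤ) = (i : ℤ) + 1 ∨ (j : ℤ) = (i : ℤ) + 2)

namespace StripAux

variable {n : ℕ} (hn : 5 ≤ n)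
include hn

lemma cast_eq_iff (a b : ℤ) : ((a : ZMod n) = (b : ZMod n)) ↔ (n : ℤ) ∣ a - b := by
  haveI : NeZero n := ⟨by omega⟩
  rw [ZMod.intCast_eq_intCast_iff, Int.modEq_iff_dvd, dvd_sub_comm]

lemma dvd_bound (x : ℤ) (h : (n : ℤ) ∣ x) (h1 : 0 < x) (h2 : x < n) : False := by
  have := Int.le_of_dvd h1 h
  omega

lemma frame_eq_iff (a b : ℤ) : frame n a = frame n b ↔ (n : ℤ) ∣ a - b := by
  unfold frame
  rw [Sym2.eq_iff]
  constructor
  · rintro (⟨h, -⟩ | ⟨h1, h2⟩)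
    · exact (cast_eq_iff hn _ _).mp h
    · exfalso
      have hA := (cast_eq_iff hn _ _).mp h1
      have hB := (cast_eq_iff hn _ _).mp h2
      refine dvd_bound hn 2 ?_ (by omega) (by omega)
      rw [show (2:ℤ) = (a + 1 - b) - (a - (b + 1)) by ring]
      exact dvd_sub hB hA
  · intro h
    left
    exact ⟨(cast_eq_iff hn _ _).mpr (by simpa using h),
      (cast_eq_iff hn _ _).mpr (by rw [show a + 1 - (b + 1) = a - b by ring]; exact h)⟩

lemma window_eq_iff (a b : ℤ) : window n a = window n b ↔ (n : ℤ) ∣ a - b := by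
  unfold window
  rw [Sym2.eq_iff]
  constructor
  · rintro (⟨h, -⟩ | ⟨h1, h2⟩)
    · exact (cast_eq_iff hn _ _).mp h
    · exfalso
      have hA := (cast_eq_iff hn _ _).mp h1
      have hB := (cast_eq_iff hn _ _).mp h2
      refine dvd_bound hn 4 ?_ (by omega) (by omega)
      rw [show (4:ℤ) = (a + 2 - b) - (a - (b + 2)) by ring]
      exact dvd_sub hB hA
  · intro h
    left
    exact ⟨(cast_eq_iff hn _ _).mpr (by simpa using h),
      (cast_eq_iff hn _ _).mpr (by rw [show a + 2 - (b + 2) = a - b by ring]; exact h)⟩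

lemma window_ne_frame (a b : ℤ) : window n a ≠ frame n b := by
  unfold window frame
  rw [Ne, Sym2.eq_iff]
  rintro (⟨h1, h2⟩ | ⟨h1, h2⟩)
  · have hA := (cast_eq_iff hn _ _).mp h1
    have hB := (cast_eq_iff hn _ _).mp h2
    refine dvd_bound hn 1 ?_ (by omega) (by omega)
    rw [show (1:ℤ) = (a + 2 - (b + 1)) - (a - b) by ring]
    exact dvd_sub hB hA
  · have hA := (cast_eq_iff hn _ _).mp h1
    have hB := (cast_eq_iff hn _ _).mp h2
    refine dvd_bound hn 3 ?_ (by omega) (by omega)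
    rw [show (3:ℤ) = (a + 2 - b) - (a - (b + 1)) by ring]
    exact dvd_sub hB hA

lemma frame_mem_edgeSet (a : ℤ) : frame n a ∈ (squareCycle n).edgeSet := by
  rw [frame, mem_edgeSet, squareCycle, fromRel_adj]
  refine ⟨fun h => ?_, Or.inr (Or.inl (by push_cast; ring))⟩
  have h2 := (cast_eq_iff hn _ _).mp h
  refine dvd_bound hn 1 ?_ (by omega) (by omega)
  rw [show (1:ℤ) = -(a - (a+1)) by ring]
  exact h2.neg_right

lemma window_mem_edgeSet (a : ℤ) : window n a ∈ (squareCycle n).edgeSet := by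
  rw [window, mem_edgeSet, squareCycle, fromRel_adj]
  refine ⟨fun h => ?_, Or.inr (Or.inr (by push_cast; ring))⟩
  have h2 := (cast_eq_iff hn _ _).mp h
  refine dvd_bound hn 2 ?_ (by omega) (by omega)
  rw [show (2:ℤ) = -(a - (a+2)) by ring]
  exact h2.neg_right

lemma window_mem_esc (a k j : ℤ) :
    window n a ∈ escapeRoute n k j ↔ (n:ℤ) ∣ a - j ∨ (n:ℤ) ∣ a - (j + 2*k + 1) := by
  simp only [escapeRoute, Set.mem_union, Set.mem_insert_iff, Set.mem_singleton_iff,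
    Set.mem_image, Set.mem_setOf_eq]
  constructor
  · rintro ((h | h) | ⟨i, -, h⟩)
    · exact Or.inl ((window_eq_iff hn _ _).mp h)
    · exact Or.inr ((window_eq_iff hn _ _).mp h)
    · exact absurd h.symm (window_ne_frame hn a i)
  · rintro (h | h)
    · exact Or.inl (Or.inl ((window_eq_iff hn _ _).mpr h))
    · exact Or.inl (Or.inr ((window_eq_iff hn _ _).mpr h))

lemma frame_mem_esc (a k j : ℤ) :
    frame n a ∈ escapeRoute n k j ↔ ∃ i, j + 1 ≤ i ∧ i ≤ j + 2*k + 1 ∧ (n:ℤ) ∣ a - i := by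
  simp only [escapeRoute, Set.mem_union, Set.mem_insert_iff, Set.mem_singleton_iff,
    Set.mem_image, Set.mem_setOf_eq]
  constructor
  · rintro ((h | h) | ⟨i, ⟨hi1, hi2⟩, h⟩)
    · exact absurd h (window_ne_frame hn j a).symm
    · exact absurd h (window_ne_frame hn _ a).symm
    · exact ⟨i, hi1, hi2, (frame_eq_iff hn _ _).mp h.symm⟩
  · rintro ⟨i, hi1, hi2, h⟩
    exact Or.inr ⟨i, ⟨hi1, hi2⟩, ((frame_eq_iff hn _ _).mpr h).symm⟩

lemma k_bound (k : ℤ) (hk : k ≤ ⌈((n : ℚ) - 2) / 2⌉) : 2*k + 1 ≤ (n:ℤ) := by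
  have h1 : (⌈((n:ℚ)-2)/2⌉ : ℚ) < ((n:ℚ)-2)/2 + 1 := Int.ceil_lt_add_one _
  have h2 : (k:ℚ) ≤ (⌈((n:ℚ)-2)/2⌉ : ℚ) := by exact_mod_cast hk
  have h3 : ((2*k : ℤ) : ℚ) < ((n:ℤ) : ℚ) := by push_cast; linarith
  have h4 : (2*k : ℤ) < (n:ℤ) := by exact_mod_cast h3
  omega

lemma esc_shift (k j j' : ℤ) (h : (n:ℤ) ∣ j' - j) :
    escapeRoute n k j = escapeRoute n k j' := by
  obtain ⟨t, ht⟩ := h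
  unfold escapeRoute
  congr 1
  · rw [(window_eq_iff hn j j').mpr ⟨-t, by linarith⟩,
      (window_eq_iff hn (j + 2*k + 1) (j' + 2*k + 1)).mpr ⟨-t, by linarith⟩]
  · ext e
    simp only [Set.mem_image, Set.mem_setOf_eq]
    constructor
    · rintro ⟨i, ⟨hi1, hi2⟩, rfl⟩
      exact ⟨i + n*t, ⟨by linarith, by linarith⟩,
        ((frame_eq_iff hn (i + n*t) i).mpr ⟨t, by ring⟩)⟩
    · rintro ⟨i, ⟨hi1, hi2⟩, rfl⟩
      exact ⟨i - n*t, ⟨by linarith, by linarith⟩,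
        ((frame_eq_iff hn (i - n*t) i).mpr ⟨-t, by ring⟩)⟩

end StripAux

open StripAux

set_option maxHeartbeats 1000000 in
/-- If every edge of `S_{n,k,j}` is an edge of `S_{n,k',j'}`, then the two escape
routes coincide, so the two strip graphs with tails are equal. -/
theorem stripTails_le_eq (n : ℕ) (hn : 5 ≤ n) (j k j' k' : ℤ)
    (hk0 : 0 ≤ k) (hk : k ≤ ⌈((n : ℚ) - 2) / 2⌉)
    (hk0' : 0 ≤ k') (hk' : k' ≤ ⌈((n : ℚ) - 2) / 2⌉)
    (hle : stripTails n k j ≤ stripTails n k' j') :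
    escapeRoute n k j = escapeRoute n k' j' ∧ stripTails n k j = stripTails n k' j' := by
  have hb : 2*k + 1 ≤ (n:ℤ) := k_bound hn k hk
  have hb' : 2*k' + 1 ≤ (n:ℤ) := k_bound hn k' hk'
  have key : ∀ e ∈ (squareCycle n).edgeSet, e ∈ escapeRoute n k' j' → e ∈ escapeRoute n k j := by
    intro e he he'
    by_contra h
    have h2 := SimpleGraph.edgeSet_mono hle
      (show e ∈ (stripTails n k j).edgeSet by
        rw [stripTails, edgeSet_deleteEdges]; exact ⟨he, h⟩)
    rw [stripTails, edgeSet_deleteEdges] at h2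
    exact h2.2 he'
  -- the frame e_j trick
  have ej : frame n j ∈ escapeRoute n k' j' → 2*k + 1 = (n:ℤ) := by
    intro h
    obtain ⟨i, hi1, hi2, hdvd⟩ := (frame_mem_esc hn j k j).mp
      (key _ (frame_mem_edgeSet hn j) h)
    have := Int.le_of_dvd (show (0:ℤ) < -(j - i) by omega) hdvd.neg_right
    omega
  -- if ES' uses all frames, frame e_j is among them
  have full : 2*k' + 1 = (n:ℤ) → frame n j ∈ escapeRoute n k' j' := by
    intro h
    rw [frame_mem_esc hn]
    set r := (j - j' - 1) % (n:ℤ) with hr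
    have hr0 : 0 ≤ r := Int.emod_nonneg _ (by omega)
    have hr1 : r < n := Int.emod_lt_of_pos _ (by omega)
    refine ⟨j' + 1 + r, by omega, by omega, ?_⟩
    have h2 := Int.emod_add_mul_ediv (j - j' - 1) (n:ℤ)
    exact ⟨(j - j' - 1) / n, by linarith⟩
  have hw1 : (n:ℤ) ∣ j' - j ∨ (n:ℤ) ∣ j' - (j + 2*k + 1) :=
    (window_mem_esc hn j' k j).mp (key _ (window_mem_edgeSet hn j')
      ((window_mem_esc hn j' k' j').mpr (Or.inl (by simp))))
  have hw2 : (n:ℤ) ∣ (j' + 2*k' + 1) - j ∨ (n:ℤ) ∣ (j' + 2*k' + 1) - (j + 2*k + 1) :=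
    (window_mem_esc hn _ k j).mp (key _ (window_mem_edgeSet hn _)
      ((window_mem_esc hn _ k' j').mpr (Or.inr (by simp))))
  have main : k = k' ∧ (n:ℤ) ∣ j' - j := by
    rcases hw1 with h1 | h1
    · rcases hw2 with h2 | h2
      · -- n ∣ 2k'+1
        have h3 : (n:ℤ) ∣ 2*k' + 1 := by
          rw [show 2*k' + 1 = ((j' + 2*k' + 1) - j) - (j' - j) by ring]
          exact dvd_sub h2 h1
        have h4 : 2*k' + 1 = (n:ℤ) := by
          have := Int.le_of_dvd (by omega) h3
          omega
        have h5 := ej (full h4)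
        exact ⟨by omega, h1⟩
      · -- n ∣ 2k' - 2k
        have h3 : (n:ℤ) ∣ 2*k' - 2*k := by
          rw [show 2*k' - 2*k = ((j' + 2*k' + 1) - (j + 2*k + 1)) - (j' - j) by ring]
          exact dvd_sub h2 h1
        have h4 : k = k' := by
          rcases lt_trichotomy k k' with h | h | h
          · have := Int.le_of_dvd (by omega) h3; omega
          · exact h
          · have := Int.le_of_dvd (by omega) h3.neg_right; omega
        exact ⟨h4, h1⟩
    · rcases hw2 with h2 | h2
      · -- frame e_j ∈ ES' via its right endpoint
        have hmem : frame n j ∈ escapeRoute n k' j' := by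
          rw [frame_mem_esc hn]
          refine ⟨j' + 2*k' + 1, by omega, by omega, ?_⟩
          rw [show j - (j' + 2*k' + 1) = -((j' + 2*k' + 1) - j) by ring]
          exact h2.neg_right
        have h5 := ej hmem
        -- n ∣ 2k+2k'+2 = (2k'+1) + n
        have h3 : (n:ℤ) ∣ 2*k' + 1 := by
          have h6 : (n:ℤ) ∣ 2*k + 2*k' + 2 := by
            rw [show 2*k + 2*k' + 2 = ((j' + 2*k' + 1) - j) - (j' - (j + 2*k + 1)) by ring]
            exact dvd_sub h2 h1
          rw [show 2*k' + 1 = (2*k + 2*k' + 2) - (2*k + 1) by ring, h5]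
          exact dvd_sub h6 (dvd_refl _)
        have h4 : 2*k' + 1 = (n:ℤ) := by
          have := Int.le_of_dvd (by omega) h3
          omega
        refine ⟨by omega, ?_⟩
        rw [show j' - j = (j' - (j + 2*k + 1)) + (2*k + 1) by ring, h5]
        exact dvd_add h1 (dvd_refl _)
      · -- n ∣ 2k'+1
        have h3 : (n:ℤ) ∣ 2*k' + 1 := by
          rw [show 2*k' + 1 = ((j' + 2*k' + 1) - (j + 2*k + 1)) - (j' - (j + 2*k + 1)) by ring]
          exact dvd_sub h2 h1
        have h4 : 2*k' + 1 = (n:ℤ) := by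
          have := Int.le_of_dvd (by omega) h3
          omega
        have h5 := ej (full h4)
        refine ⟨by omega, ?_⟩
        rw [show j' - j = (j' - (j + 2*k + 1)) + (2*k + 1) by ring, h5]
        exact dvd_add h1 (dvd_refl _)
  obtain ⟨rfl, hdvd⟩ := main
  have hES := esc_shift hn k j j' hdvd
  exact ⟨hES, by rw [stripTails, stripTails, hES]⟩
end

section
/- For every integer n ≥ 2, the number of spanning trees of the strip graph S_n equals F_{2n-2}, where F_m is the m-th Fibonacci number. -/
open SimpleGraph

namespace STAux
variable {V W : Type*} (f : V ↪ W) (H : SimpleGraph W)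

/-- The canonical hom from the comap graph. -/
def liftHom : (H.comap f) →g H := ⟨f, fun h => h⟩

@[simp] lemma liftHom_apply (a : V) : liftHom f H a = f a := rfl

lemma exists_walk_lift_aux : ∀ {x y : W} (p : H.Walk x y),
    (∀ z ∈ p.support, z ∈ Set.range f) → ∀ {a b : V} (ha : x = f a) (hb : y = f b),
    ∃ q : (H.comap f).Walk a b, q.map (liftHom f H) = p.copy ha hb := by
  intro x y p
  induction p with
  | nil =>
    intro hp a b ha hb
    obtain rfl : a = b := f.injective (ha.symm.trans hb)
    subst ha
    exact ⟨Walk.nil, rfl⟩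
  | cons h p ih =>
    rename_i u c y'
    intro hp a b ha hb
    obtain ⟨c', rfl⟩ := hp c (by simp)
    subst ha
    have hadj : (H.comap f).Adj a c' := h
    obtain ⟨q, hq⟩ := ih (fun z hz => hp z (by simp [hz])) rfl hb
    refine ⟨Walk.cons hadj q, ?_⟩
    subst hb
    rw [Walk.copy_cons]
    simp [Walk.map_cons, hq]

lemma exists_walk_lift {a b : V} (p : H.Walk (f a) (f b))
    (hp : ∀ z ∈ p.support, z ∈ Set.range f) :
    ∃ q : (H.comap f).Walk a b, q.map (liftHom f H) = p := by
  simpa using exists_walk_lift_aux f H p hp rfl rfl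

lemma reachable_comap_of_walk {a b : V} (p : H.Walk (f a) (f b))
    (hp : ∀ z ∈ p.support, z ∈ Set.range f) :
    (H.comap f).Reachable a b := by
  obtain ⟨q, _⟩ := exists_walk_lift f H p hp
  exact ⟨q⟩

lemma comap_not_acyclic {a : V} (p : H.Walk (f a) (f a)) (hc : p.IsCycle)
    (hp : ∀ z ∈ p.support, z ∈ Set.range f) :
    ¬ (H.comap f).IsAcyclic := by
  obtain ⟨q, hq⟩ := exists_walk_lift f H p hp
  intro hA
  refine hA q ?_
  have : (q.map (liftHom f H)).IsCycle := hq ▸ hc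
  exact (Walk.map_isCycle_iff_of_injective (f := liftHom f H) f.injective).mp this

lemma comap_isAcyclic (h : H.IsAcyclic) : (H.comap f).IsAcyclic := by
  intro a q hq
  exact h (q.map (liftHom f H)) (hq.map f.injective)

lemma reachable_map_comap {a b : V} (h : (H.comap f).Reachable a b) :
    H.Reachable (f a) (f b) := h.map (liftHom f H)


section
variable {v : W}

/-- From a reachability to `v`, extract a neighbor of `v` reachable in the comap graph. -/
lemma exists_nbr_of_reachable (hf : ∀ x : W, x ∈ Set.range f ↔ x ≠ v)
    {u' : V} (h : H.Reachable (f u') v) :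
    ∃ w' : V, H.Adj v (f w') ∧ (H.comap f).Reachable u' w' := by
  classical
  obtain ⟨p0⟩ := h
  let p := p0.toPath
  have hne : v ≠ f u' := by
    intro hvu
    have := (hf (f u')).mp ⟨u', rfl⟩
    exact this hvu.symm
  obtain ⟨w, h2, q0, hq⟩ := Walk.exists_eq_cons_of_ne hne (p : H.Walk (f u') v).reverse
  have hrevsupp : (p : H.Walk (f u') v).support.reverse = v :: q0.support := by
    rw [← Walk.support_reverse, hq, Walk.support_cons]
  have hnd : (p : H.Walk (f u') v).support.Nodup := p.2.support_nodup
  have hvq : v ∉ q0.support := by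
    have : (v :: q0.support).Nodup := by rw [← hrevsupp]; exact List.nodup_reverse.mpr hnd
    exact (List.nodup_cons.mp this).1
  have hrange : ∀ z ∈ q0.support, z ∈ Set.range f := by
    intro z hz
    exact (hf z).mpr (fun hzv => hvq (hzv ▸ hz))
  obtain ⟨w', rfl⟩ := hrange w q0.start_mem_support
  refine ⟨w', h2, ?_⟩
  exact (reachable_comap_of_walk f H q0 hrange).symm

lemma reachable_comap_of_not_reachable (hf : ∀ x : W, x ∈ Set.range f ↔ x ≠ v)
    {u' w' : V} (h : H.Reachable (f u') (f w'))
    (hv : ¬ H.Reachable v (f w')) : (H.comap f).Reachable u' w' := by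
  classical
  obtain ⟨p0⟩ := h
  let p : H.Walk (f u') (f w') := p0.toPath
  by_cases hvp : v ∈ p.support
  · exact absurd ⟨p.dropUntil v hvp⟩ hv
  · exact reachable_comap_of_walk f H p (fun z hz => (hf z).mpr (fun h' => hvp (h' ▸ hz)))

lemma cycle_cases (hf : ∀ x : W, x ∈ Set.range f ↔ x ≠ v) (h : ¬ H.IsAcyclic) :
    (¬ (H.comap f).IsAcyclic) ∨
      ∃ x' y' : V, x' ≠ y' ∧ H.Adj v (f x') ∧ H.Adj v (f y') ∧
        (H.comap f).Reachable x' y' := by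
  classical
  unfold SimpleGraph.IsAcyclic at h
  push_neg at h
  obtain ⟨u, c, hc⟩ := h
  by_cases hvc : v ∈ c.support
  · -- rotate the cycle to start at `v`
    have hc' : (c.rotate v hvc).IsCycle := hc.rotate hvc
    generalize hcc : c.rotate v hvc = c' at hc'
    clear hcc hc hvc c u
    cases c' with
    | nil => exact absurd rfl hc'.ne_nil
    | cons h1 p =>
      rename_i x
      have hxv : v ≠ x := h1.ne
      obtain ⟨y, h2, q0, hq⟩ := Walk.exists_eq_cons_of_ne hxv p.reverse
      have hpsupp : p.support.reverse = v :: q0.support := by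
        rw [← Walk.support_reverse, hq, Walk.support_cons]
      have hnd : p.support.Nodup := by
        have := hc'.support_nodup
        simpa [Walk.support_cons] using this
      have hvq : v ∉ q0.support := by
        have : (v :: q0.support).Nodup := by rw [← hpsupp]; exact List.nodup_reverse.mpr hnd
        exact (List.nodup_cons.mp this).1
      have hrange : ∀ z ∈ q0.support, z ∈ Set.range f := by
        intro z hz
        exact (hf z).mpr (fun hzv => hvq (hzv ▸ hz))
      by_cases hxy : x = y
      · -- degenerate: the cycle would have length 2
        exfalso
        subst hxy
        cases q0 with
        | nil =>
          have hp : p = (Walk.cons h2 Walk.nil).reverse := by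
            rw [← hq, Walk.reverse_reverse]
          have hed : p.edges = [s(v, x)] := by rw [hp]; simp [Walk.edges_reverse]
          have := hc'.edges_nodup
          rw [Walk.edges_cons, hed] at this
          simp [Sym2.eq_swap] at this
        | cons h3 q1 =>
          rename_i z
          have hxq1 : x ∈ q1.support := q1.end_mem_support
          have : (x :: q1.support).Nodup := by
            have hnd2 : (v :: (Walk.cons h3 q1).support).Nodup := by
              rw [← hpsupp]; exact List.nodup_reverse.mpr hnd
            simpa [Walk.support_cons] using (List.nodup_cons.mp hnd2).2
          exact (List.nodup_cons.mp this).1 hxq1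
      · -- main case: two distinct neighbors of `v` joined in the comap graph
        obtain ⟨y', rfl⟩ := hrange y q0.start_mem_support
        obtain ⟨x', rfl⟩ := hrange x q0.end_mem_support
        refine Or.inr ⟨x', y', fun hh => hxy (by rw [hh]), h1, h2, ?_⟩
        exact (reachable_comap_of_walk f H q0 hrange).symm
  · -- cycle avoiding `v` lifts
    have hrange : ∀ z ∈ c.support, z ∈ Set.range f := by
      intro z hz
      exact (hf z).mpr (fun h' => hvc (h' ▸ hz))
    obtain ⟨u', hu'⟩ := hrange u c.start_mem_support
    subst hu'
    exact Or.inl (comap_not_acyclic f H c hc hrange)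

end

def emb (m : ℕ) : Fin m ↪ Fin (m + 1) := ⟨Fin.castSucc, Fin.castSucc_injective m⟩

lemma emb_range (m : ℕ) : ∀ x : Fin (m + 1), x ∈ Set.range (emb m) ↔ x ≠ Fin.last m := by
  intro x
  constructor
  · rintro ⟨y, rfl⟩
    exact (Fin.castSucc_lt_last y).ne
  · intro h
    exact Fin.exists_castSucc_eq.mpr h

@[simp] lemma emb_val {m : ℕ} (a : Fin m) : (emb m a).val = a.val := rfl

lemma emb_ne_last {m : ℕ} (a : Fin m) : emb m a ≠ Fin.last m :=
  (Fin.castSucc_lt_last a).ne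

lemma strip_adj {m : ℕ} {i j : Fin m} : (strip m).Adj i j ↔
    i.val ≠ j.val ∧ (j.val = i.val + 1 ∨ j.val = i.val + 2 ∨
      i.val = j.val + 1 ∨ i.val = j.val + 2) := by
  simp only [strip, SimpleGraph.fromRel_adj, ne_eq, Fin.ext_iff]
  constructor
  · rintro ⟨h1, h2⟩
    refine ⟨h1, ?_⟩
    omega
  · rintro ⟨h1, h2⟩
    refine ⟨h1, ?_⟩
    omega

def newG {m : ℕ} (S : Set (Fin (m + 1))) : SimpleGraph (Fin (m + 1)) :=
  SimpleGraph.fromRel (fun x y => x = Fin.last m ∧ y ∈ S)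

def extG {m : ℕ} (H' : SimpleGraph (Fin m)) (S : Set (Fin (m + 1))) : SimpleGraph (Fin (m + 1)) :=
  H'.map (emb m) ⊔ newG S

lemma newG_adj {m : ℕ} {S : Set (Fin (m + 1))} {x y : Fin (m + 1)} :
    (newG S).Adj x y ↔ x ≠ y ∧ ((x = Fin.last m ∧ y ∈ S) ∨ (y = Fin.last m ∧ x ∈ S)) := by
  simp [newG, SimpleGraph.fromRel_adj]

lemma extG_adj_last {m : ℕ} {H' : SimpleGraph (Fin m)} {S : Set (Fin (m + 1))}
    (hS : Fin.last m ∉ S) {u : Fin (m + 1)} :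
    (extG H' S).Adj (Fin.last m) u ↔ u ∈ S := by
  simp only [extG, sup_adj, SimpleGraph.map_adj, newG_adj]
  constructor
  · rintro (⟨a, b, _, ha, _⟩ | ⟨_, (⟨_, h⟩ | ⟨h, h'⟩)⟩)
    · exact absurd ha (emb_ne_last a)
    · exact h
    · exact absurd h' hS
  · intro h
    refine Or.inr ⟨fun he => hS (he ▸ h), Or.inl ⟨by simp, h⟩⟩

lemma comap_extG {m : ℕ} {H' : SimpleGraph (Fin m)} {S : Set (Fin (m + 1))} :
    (extG H' S).comap (emb m) = H' := by
  ext a b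
  simp only [SimpleGraph.comap_adj, extG, sup_adj, newG_adj]
  constructor
  · rintro (h | ⟨_, (⟨h, _⟩ | ⟨h, _⟩)⟩)
    · exact SimpleGraph.map_adj_apply.mp h
    · exact absurd h (emb_ne_last a)
    · exact absurd h (emb_ne_last b)
  · intro h
    exact Or.inl (SimpleGraph.map_adj_apply.mpr h)

lemma extG_recover {m : ℕ} {H : SimpleGraph (Fin (m + 1))} {S : Set (Fin (m + 1))}
    (hN : ∀ u, H.Adj (Fin.last m) u ↔ u ∈ S) : extG (H.comap (emb m)) S = H := by
  have hS : Fin.last m ∉ S := fun h => H.irrefl ((hN _).mpr h)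
  ext x y
  by_cases hx : x = Fin.last m
  · subst hx
    rw [extG_adj_last hS, ← hN]
  · by_cases hy : y = Fin.last m
    · subst hy
      rw [SimpleGraph.adj_comm, extG_adj_last hS, ← hN, SimpleGraph.adj_comm]
    · obtain ⟨x', rfl⟩ := (emb_range m x).mpr hx
      obtain ⟨y', rfl⟩ := (emb_range m y).mpr hy
      simp only [extG, sup_adj, newG_adj, SimpleGraph.map_adj_apply, SimpleGraph.comap_adj]
      constructor
      · rintro (h | ⟨_, (⟨h, _⟩ | ⟨h, _⟩)⟩)
        · exact h
        · exact absurd h (emb_ne_last x')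
        · exact absurd h (emb_ne_last y')
      · exact fun h => Or.inl h

def extHom {m : ℕ} (H' : SimpleGraph (Fin m)) (S : Set (Fin (m + 1))) : H' →g extG H' S :=
  ⟨emb m, fun {a b} h => Or.inl (SimpleGraph.map_adj_apply.mpr h)⟩

lemma reach_extG {m : ℕ} {H' : SimpleGraph (Fin m)} {S : Set (Fin (m + 1))} {a b : Fin m}
    (h : H'.Reachable a b) : (extG H' S).Reachable (emb m a) (emb m b) :=
  h.map (extHom H' S)


def VA (n : ℕ) : Fin (n + 3) := ⟨n + 1, by omega⟩
def VB (n : ℕ) : Fin (n + 3) := ⟨n, by omega⟩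
def PP (n : ℕ) : Fin (n + 2) := ⟨n + 1, by omega⟩
def QQ (n : ℕ) : Fin (n + 2) := ⟨n, by omega⟩

lemma emb_PP (n : ℕ) : emb (n + 2) (PP n) = VA n := rfl
lemma emb_QQ (n : ℕ) : emb (n + 2) (QQ n) = VB n := rfl
lemma VA_ne_VB (n : ℕ) : VA n ≠ VB n := by simp [VA, VB, Fin.ext_iff]
lemma last_eq (n : ℕ) : (Fin.last (n + 2) : Fin (n + 3)) = ⟨n + 2, by omega⟩ := rfl

/-- Two-component spanning forests separating the top two vertices. -/
def IsTF (m : ℕ) (H : SimpleGraph (Fin (m + 2))) : Prop :=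
  H.IsAcyclic ∧ ¬H.Reachable ⟨m + 1, by omega⟩ ⟨m, by omega⟩ ∧
    ∀ u, H.Reachable u ⟨m + 1, by omega⟩ ∨ H.Reachable u ⟨m, by omega⟩

lemma map_strip_le (m : ℕ) : (strip m).map (emb m) ≤ strip (m + 1) := by
  intro x y h
  rw [SimpleGraph.map_adj] at h
  obtain ⟨a, b, hab, rfl, rfl⟩ := h
  rw [strip_adj] at hab ⊢
  simpa using hab

lemma comap_strip_le {m : ℕ} {H : SimpleGraph (Fin (m + 1))} (h : H ≤ strip (m + 1)) :
    H.comap (emb m) ≤ strip m := by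
  intro a b hab
  have h2 := h hab
  rw [strip_adj] at h2 ⊢
  simpa using h2

lemma strip_adj_last_A (n : ℕ) : (strip (n + 3)).Adj (Fin.last (n + 2)) (VA n) := by
  rw [strip_adj]; simp [VA, Fin.last]

lemma strip_adj_last_B (n : ℕ) : (strip (n + 3)).Adj (Fin.last (n + 2)) (VB n) := by
  rw [strip_adj]; simp [VB, Fin.last]

lemma strip_last_nbr {n : ℕ} {u : Fin (n + 3)}
    (h : (strip (n + 3)).Adj (Fin.last (n + 2)) u) : u = VA n ∨ u = VB n := by
  rw [strip_adj] at h
  have hu := u.isLt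
  simp only [Fin.val_last] at h
  rcases h with ⟨h1, h2⟩
  rw [VA, VB, Fin.ext_iff, Fin.ext_iff]
  simp only
  omega

lemma extG_le_strip {n : ℕ} {H' : SimpleGraph (Fin (n + 2))} {S : Set (Fin (n + 3))}
    (h : H' ≤ strip (n + 2)) (hS : S ⊆ {VA n, VB n}) : extG H' S ≤ strip (n + 3) := by
  rw [extG]
  apply sup_le
  · exact le_trans (SimpleGraph.map_monotone (emb (n+2)) h) (map_strip_le (n + 2))
  · intro x y hxy
    rw [newG_adj] at hxy
    obtain ⟨hne, (⟨rfl, hy⟩ | ⟨rfl, hx⟩)⟩ := hxy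
    · rcases hS hy with rfl | rfl
      · exact strip_adj_last_A n
      · exact strip_adj_last_B n
    · rcases hS hx with rfl | rfl
      · exact (strip_adj_last_A n).symm
      · exact (strip_adj_last_B n).symm


lemma reach_last_of_adj {m : ℕ} {G : SimpleGraph (Fin (m + 1))} {x : Fin (m + 1)}
    (h : G.Adj (Fin.last m) x) : G.Reachable x (Fin.last m) := h.symm.reachable

lemma isTree_extG_single {m : ℕ} {H' : SimpleGraph (Fin m)} (hT : H'.IsTree) (s0 : Fin m) :
    (extG H' {emb m s0}).IsTree := by
  set G := extG H' {emb m s0} with hG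
  have hS : Fin.last m ∉ ({emb m s0} : Set (Fin (m + 1))) := by
    simp [Set.mem_singleton_iff]
    exact fun h => (emb_ne_last s0) h.symm
  have hadj : G.Adj (Fin.last m) (emb m s0) := (extG_adj_last hS).mpr rfl
  have hreach : ∀ u : Fin (m + 1), G.Reachable u (Fin.last m) := by
    intro u
    by_cases hu : u = Fin.last m
    · exact hu ▸ Reachable.refl u
    · obtain ⟨u', rfl⟩ := (emb_range m u).mpr hu
      have h1 : H'.Reachable u' s0 := hT.isConnected.preconnected u' s0
      exact (reach_extG h1).trans hadj.symm.reachable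
  constructor
  · exact ⟨fun u w => (hreach u).trans (hreach w).symm⟩
  · by_contra hcyc
    rcases cycle_cases (emb m) G (emb_range m) hcyc with hL | ⟨x', y', hne, h1, h2, _⟩
    · rw [hG, comap_extG] at hL
      exact hL hT.IsAcyclic
    · rw [extG_adj_last hS] at h1 h2
      exact hne ((emb m).injective (h1.trans h2.symm))

lemma isTree_extG_pair {n : ℕ} {H' : SimpleGraph (Fin (n + 2))} (h : IsTF n H') :
    (extG H' {VA n, VB n}).IsTree := by
  set G := extG H' {VA n, VB n} with hG
  have hS : Fin.last (n + 2) ∉ ({VA n, VB n} : Set (Fin (n + 3))) := by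
    rw [last_eq]
    simp [VA, VB, Fin.ext_iff]
  have hadjA : G.Adj (Fin.last (n + 2)) (VA n) := (extG_adj_last hS).mpr (by simp)
  have hadjB : G.Adj (Fin.last (n + 2)) (VB n) := (extG_adj_last hS).mpr (by simp)
  have hreach : ∀ u : Fin (n + 3), G.Reachable u (Fin.last (n + 2)) := by
    intro u
    by_cases hu : u = Fin.last (n + 2)
    · exact hu ▸ Reachable.refl u
    · obtain ⟨u', rfl⟩ := (emb_range (n + 2) u).mpr hu
      rcases h.2.2 u' with h1 | h1
      · exact (reach_extG h1).trans (emb_PP n ▸ hadjA.symm.reachable)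
      · exact (reach_extG h1).trans (emb_QQ n ▸ hadjB.symm.reachable)
  constructor
  · exact ⟨fun u w => (hreach u).trans (hreach w).symm⟩
  · by_contra hcyc
    rcases cycle_cases (emb (n + 2)) G (emb_range (n + 2)) hcyc with hL | ⟨x', y', hne, h1, h2, hr⟩
    · rw [hG, comap_extG] at hL
      exact hL h.1
    · rw [extG_adj_last hS] at h1 h2
      rw [hG, comap_extG] at hr
      have hPQ : H'.Reachable (PP n) (QQ n) := by
        rcases h1 with h1 | h1 <;> rcases h2 with h2 | h2
        · exact absurd ((emb (n + 2)).injective ((emb_PP n ▸ h1 : _).trans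
            (emb_PP n ▸ h2 : _).symm)) hne
        · exact ((emb (n+2)).injective (emb_PP n ▸ h1) : x' = PP n) ▸
            ((emb (n+2)).injective (emb_QQ n ▸ h2) : y' = QQ n) ▸ hr
        · exact (((emb (n+2)).injective (emb_PP n ▸ h2) : y' = PP n) ▸
            ((emb (n+2)).injective (emb_QQ n ▸ h1) : x' = QQ n) ▸ hr).symm
        · exact absurd ((emb (n + 2)).injective ((emb_QQ n ▸ h1 : _).trans
            (emb_QQ n ▸ h2 : _).symm)) hne
      exact h.2.1 hPQ

lemma isTF_extG_empty {n : ℕ} {H' : SimpleGraph (Fin (n + 2))} (hT : H'.IsTree) :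
    IsTF (n + 1) (extG H' (∅ : Set (Fin (n + 3)))) := by
  set G := extG H' (∅ : Set (Fin (n + 3))) with hG
  have hS : Fin.last (n + 2) ∉ (∅ : Set (Fin (n + 3))) := Set.notMem_empty _
  have hlast : (⟨n + 2, by omega⟩ : Fin (n + 3)) = Fin.last (n + 2) := rfl
  have hVA : (⟨n + 1, by omega⟩ : Fin (n + 3)) = emb (n + 2) (PP n) := rfl
  refine ⟨?_, ?_, ?_⟩
  · by_contra hcyc
    rcases cycle_cases (emb (n + 2)) G (emb_range (n + 2)) hcyc with hL | ⟨x', y', _, h1, _, _⟩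
    · rw [hG, comap_extG] at hL
      exact hL hT.IsAcyclic
    · exact (extG_adj_last hS).mp h1
  · rw [hlast, hVA]
    intro hr
    obtain ⟨w', hw, _⟩ := exists_nbr_of_reachable (emb (n + 2)) G (emb_range (n + 2)) hr.symm
    exact (extG_adj_last hS).mp hw
  · intro u
    by_cases hu : u = Fin.last (n + 2)
    · exact Or.inl (by rw [hlast, hu])
    · obtain ⟨u', rfl⟩ := (emb_range (n + 2) u).mpr hu
      exact Or.inr (by rw [hVA]; exact reach_extG (hT.isConnected.preconnected u' (PP n)))

lemma isTF_extG_B {n : ℕ} {H' : SimpleGraph (Fin (n + 2))} (h : IsTF n H') :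
    IsTF (n + 1) (extG H' {VB n}) := by
  set G := extG H' {VB n} with hG
  have hS : Fin.last (n + 2) ∉ ({VB n} : Set (Fin (n + 3))) := by
    rw [last_eq]; simp [VB, Fin.ext_iff]
  have hlast : (⟨n + 2, by omega⟩ : Fin (n + 3)) = Fin.last (n + 2) := rfl
  have hVA : (⟨n + 1, by omega⟩ : Fin (n + 3)) = emb (n + 2) (PP n) := rfl
  have hadjB : G.Adj (Fin.last (n + 2)) (VB n) := (extG_adj_last hS).mpr rfl
  refine ⟨?_, ?_, ?_⟩
  · by_contra hcyc
    rcases cycle_cases (emb (n + 2)) G (emb_range (n + 2)) hcyc with hL | ⟨x', y', hne, h1, h2, _⟩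
    · rw [hG, comap_extG] at hL
      exact hL h.1
    · rw [extG_adj_last hS] at h1 h2
      exact hne ((emb (n + 2)).injective ((emb_QQ n ▸ h1 : _).trans (emb_QQ n ▸ h2 : _).symm))
  · rw [hlast, hVA]
    intro hr
    obtain ⟨w', hw, hrw⟩ := exists_nbr_of_reachable (emb (n + 2)) G (emb_range (n + 2)) hr.symm
    rw [extG_adj_last hS] at hw
    have hwq : w' = QQ n := (emb (n + 2)).injective (emb_QQ n ▸ hw)
    subst hwq
    rw [hG, comap_extG] at hrw
    exact h.2.1 hrw
  · intro u
    by_cases hu : u = Fin.last (n + 2)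
    · exact Or.inl (by rw [hlast, hu])
    · obtain ⟨u', rfl⟩ := (emb_range (n + 2) u).mpr hu
      rcases h.2.2 u' with h1 | h1
      · exact Or.inr (by rw [hVA]; exact reach_extG h1)
      · refine Or.inl ?_
        rw [hlast]
        exact (emb_QQ n ▸ reach_extG h1 : G.Reachable _ (VB n)).trans hadjB.symm.reachable


lemma exists_nbr_of_connected {m : ℕ} {H : SimpleGraph (Fin (m + 1))} (hC : H.Connected)
    (u' : Fin m) : ∃ w', H.Adj (Fin.last m) (emb m w') ∧ (H.comap (emb m)).Reachable u' w' :=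
  exists_nbr_of_reachable (emb m) H (emb_range m)
    (hC.preconnected (emb m u') (Fin.last m))

lemma isTree_comap_single {m : ℕ} {H : SimpleGraph (Fin (m + 1))} (hT : H.IsTree)
    (s0 : Fin m) (hN : ∀ u, H.Adj (Fin.last m) u ↔ u = emb m s0) :
    (H.comap (emb m)).IsTree := by
  have hreach : ∀ u', (H.comap (emb m)).Reachable u' s0 := by
    intro u'
    obtain ⟨w', hw, hr⟩ := exists_nbr_of_connected hT.isConnected u'
    have : w' = s0 := (emb m).injective ((hN _).mp hw)
    exact this ▸ hr
  constructor
  · have : Nonempty (Fin m) := ⟨s0⟩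
    exact ⟨fun u w => (hreach u).trans (hreach w).symm⟩
  · exact comap_isAcyclic (emb m) H hT.IsAcyclic

lemma isTF_comap_pair {n : ℕ} {H : SimpleGraph (Fin (n + 3))} (hT : H.IsTree)
    (hN : ∀ u, H.Adj (Fin.last (n + 2)) u ↔ u ∈ ({VA n, VB n} : Set (Fin (n + 3)))) :
    IsTF n (H.comap (emb (n + 2))) := by
  have hadjA : H.Adj (Fin.last (n + 2)) (VA n) := (hN _).mpr (by simp)
  have hadjB : H.Adj (Fin.last (n + 2)) (VB n) := (hN _).mpr (by simp)
  refine ⟨comap_isAcyclic (emb (n + 2)) H hT.IsAcyclic, ?_, ?_⟩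
  · intro hr
    -- map the reachability into H, avoiding the last vertex
    obtain ⟨q⟩ := hr
    have hq := q.map (liftHom (emb (n + 2)) H)
    have hsup : ∀ z ∈ (q.map (liftHom (emb (n + 2)) H)).support, z ≠ Fin.last (n + 2) := by
      intro z hz
      rw [Walk.support_map] at hz
      obtain ⟨a, _, rfl⟩ := List.mem_map.mp hz
      exact emb_ne_last a
    -- H is acyclic, so the edge from last to VA is a bridge
    have hbr := (SimpleGraph.isAcyclic_iff_forall_adj_isBridge.mp hT.IsAcyclic) hadjA
    rw [SimpleGraph.isBridge_iff] at hbr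
    apply hbr
    rw [SimpleGraph.reachable_delete_edges_iff_exists_walk]
    refine ⟨Walk.cons hadjB ((q.map (liftHom (emb (n + 2)) H)).reverse), ?_⟩
    intro hmem
    change s(Fin.last (n + 2), VA n) ∈ s(Fin.last (n + 2), VB n) :: _ at hmem
    rcases List.mem_cons.mp hmem with hc | hc
    · rw [Sym2.eq_iff] at hc
      rcases hc with ⟨_, hc⟩ | ⟨hc, _⟩
      · exact VA_ne_VB n hc
      · exact emb_ne_last (QQ n) ((emb_QQ n).trans hc.symm)
    · change s(Fin.last (n + 2), VA n) ∈ ((q.map (liftHom (emb (n + 2)) H)).reverse).edges at hc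
      rw [Walk.edges_reverse, List.mem_reverse] at hc
      exact hsup _ (Walk.fst_mem_support_of_mem_edges _ hc) rfl
  · intro u'
    obtain ⟨w', hw, hr⟩ := exists_nbr_of_connected hT.isConnected u'
    rcases (hN _).mp hw with hc | hc
    · have hw' : w' = PP n := (emb (n + 2)).injective (hc.trans (emb_PP n).symm)
      subst hw'
      exact Or.inl hr
    · have hw' : w' = QQ n := (emb (n + 2)).injective (hc.trans (emb_QQ n).symm)
      subst hw'
      exact Or.inr hr

lemma isTree_comap_TF_empty {n : ℕ} {H : SimpleGraph (Fin (n + 3))} (h : IsTF (n + 1) H)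
    (hN : ∀ u, ¬ H.Adj (Fin.last (n + 2)) u) : (H.comap (emb (n + 2))).IsTree := by
  have hlast : (⟨n + 2, by omega⟩ : Fin (n + 3)) = Fin.last (n + 2) := rfl
  have hVA : (⟨n + 1, by omega⟩ : Fin (n + 3)) = emb (n + 2) (PP n) := rfl
  have hreach : ∀ u', (H.comap (emb (n + 2))).Reachable u' (PP n) := by
    intro u'
    rcases h.2.2 (emb (n + 2) u') with hr | hr
    · rw [hlast] at hr
      obtain ⟨w', hw, _⟩ := exists_nbr_of_reachable (emb (n + 2)) H (emb_range (n + 2)) hr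
      exact absurd hw (hN _)
    · rw [hVA] at hr
      refine reachable_comap_of_not_reachable (emb (n + 2)) H (emb_range (n + 2)) hr ?_
      exact h.2.1
  constructor
  · exact ⟨fun u w => (hreach u).trans (hreach w).symm⟩
  · exact comap_isAcyclic (emb (n + 2)) H h.1

lemma isTF_comap_TF_B {n : ℕ} {H : SimpleGraph (Fin (n + 3))} (h : IsTF (n + 1) H)
    (hN : ∀ u, H.Adj (Fin.last (n + 2)) u ↔ u = VB n) : IsTF n (H.comap (emb (n + 2))) := by
  have hlast : (⟨n + 2, by omega⟩ : Fin (n + 3)) = Fin.last (n + 2) := rfl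
  have hVA : (⟨n + 1, by omega⟩ : Fin (n + 3)) = emb (n + 2) (PP n) := rfl
  have hadjB : H.Adj (Fin.last (n + 2)) (VB n) := (hN _).mpr rfl
  refine ⟨comap_isAcyclic (emb (n + 2)) H h.1, ?_, ?_⟩
  · intro hr
    have hr2 : H.Reachable (emb (n + 2) (PP n)) (emb (n + 2) (QQ n)) :=
      reachable_map_comap (emb (n + 2)) H hr
    rw [emb_PP, emb_QQ] at hr2
    apply h.2.1
    rw [hlast, hVA, emb_PP]
    exact hadjB.reachable.trans hr2.symm
  · intro u'
    rcases h.2.2 (emb (n + 2) u') with hr | hr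
    · rw [hlast] at hr
      obtain ⟨w', hw, hrw⟩ := exists_nbr_of_reachable (emb (n + 2)) H (emb_range (n + 2)) hr
      have hwq : w' = QQ n := (emb (n + 2)).injective (emb_QQ n ▸ (hN _).mp hw)
      subst hwq
      exact Or.inr hrw
    · rw [hVA] at hr
      refine Or.inl (reachable_comap_of_not_reachable (emb (n + 2)) H (emb_range (n + 2)) hr ?_)
      exact h.2.1

lemma tree_nbr {n : ℕ} {H : SimpleGraph (Fin (n + 3))} (hT : H.IsTree)
    (hle : H ≤ strip (n + 3)) :
    (∀ u, H.Adj (Fin.last (n + 2)) u ↔ u = VA n) ∨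
    (∀ u, H.Adj (Fin.last (n + 2)) u ↔ u = VB n) ∨
    (∀ u, H.Adj (Fin.last (n + 2)) u ↔ u ∈ ({VA n, VB n} : Set (Fin (n + 3)))) := by
  by_cases hA : H.Adj (Fin.last (n + 2)) (VA n) <;>
    by_cases hB : H.Adj (Fin.last (n + 2)) (VB n)
  · refine Or.inr (Or.inr fun u => ⟨fun hu => strip_last_nbr (hle hu), ?_⟩)
    rintro (rfl | rfl) <;> assumption
  · refine Or.inl fun u => ⟨fun hu => ?_, fun hu => hu ▸ hA⟩
    rcases strip_last_nbr (hle hu) with rfl | rfl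
    · rfl
    · exact absurd hu hB
  · refine Or.inr (Or.inl fun u => ⟨fun hu => ?_, fun hu => hu ▸ hB⟩)
    rcases strip_last_nbr (hle hu) with rfl | rfl
    · exact absurd hu hA
    · rfl
  · exfalso
    obtain ⟨w', hw, _⟩ := exists_nbr_of_connected hT.isConnected (PP n)
    rcases strip_last_nbr (hle hw) with hc | hc
    · exact hA (hc ▸ hw)
    · exact hB (hc ▸ hw)

lemma TF_nbr {n : ℕ} {H : SimpleGraph (Fin (n + 3))} (h : IsTF (n + 1) H)
    (hle : H ≤ strip (n + 3)) :
    (∀ u, ¬ H.Adj (Fin.last (n + 2)) u) ∨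
    (∀ u, H.Adj (Fin.last (n + 2)) u ↔ u = VB n) := by
  have hlast : (⟨n + 2, by omega⟩ : Fin (n + 3)) = Fin.last (n + 2) := rfl
  have hVA : (⟨n + 1, by omega⟩ : Fin (n + 3)) = VA n := rfl
  have hA : ¬ H.Adj (Fin.last (n + 2)) (VA n) := by
    intro hadj
    apply h.2.1
    rw [hlast, hVA]
    exact hadj.reachable
  by_cases hB : H.Adj (Fin.last (n + 2)) (VB n)
  · refine Or.inr fun u => ⟨fun hu => ?_, fun hu => hu ▸ hB⟩
    rcases strip_last_nbr (hle hu) with rfl | rfl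
    · exact absurd hu hA
    · rfl
  · refine Or.inl fun u hu => ?_
    rcases strip_last_nbr (hle hu) with rfl | rfl
    · exact hA hu
    · exact hB hu


/-! ### Counting -/

abbrev TS (m : ℕ) := {H : SimpleGraph (Fin m) // H ≤ strip m ∧ H.IsTree}
abbrev FS (n : ℕ) := {H : SimpleGraph (Fin (n + 2)) // H ≤ strip (n + 2) ∧ IsTF n H}

instance (m : ℕ) : Finite (TS m) := Subtype.finite
instance (n : ℕ) : Finite (FS n) := Subtype.finite

lemma extG_inj {m : ℕ} {H1 H2 : SimpleGraph (Fin m)} {S1 S2 : Set (Fin (m + 1))}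
    (h1 : Fin.last m ∉ S1) (h2 : Fin.last m ∉ S2) (h : extG H1 S1 = extG H2 S2) :
    H1 = H2 ∧ S1 = S2 := by
  constructor
  · have hc := congrArg (fun G => SimpleGraph.comap (emb m) G) h
    simpa only [comap_extG] using hc
  · ext u
    rw [← extG_adj_last (H' := H1) h1 (u := u), ← extG_adj_last (H' := H2) h2 (u := u), h]

lemma last_not_mem_A (n : ℕ) : Fin.last (n + 2) ∉ ({VA n} : Set (Fin (n + 3))) := by
  simp [VA, Fin.ext_iff, Fin.last]
lemma last_not_mem_B (n : ℕ) : Fin.last (n + 2) ∉ ({VB n} : Set (Fin (n + 3))) := by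
  simp [VB, Fin.ext_iff, Fin.last]
lemma last_not_mem_AB (n : ℕ) : Fin.last (n + 2) ∉ ({VA n, VB n} : Set (Fin (n + 3))) := by
  simp [VA, VB, Fin.ext_iff, Fin.last]

def Phi (n : ℕ) : TS (n + 2) ⊕ TS (n + 2) ⊕ FS n → TS (n + 3)
  | .inl ⟨H, hle, hT⟩ => ⟨extG H {VA n},
      extG_le_strip hle (by intro x hx; exact Or.inl hx),
      by have := isTree_extG_single hT (PP n); rwa [emb_PP] at this⟩
  | .inr (.inl ⟨H, hle, hT⟩) => ⟨extG H {VB n},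
      extG_le_strip hle (by intro x hx; exact Or.inr hx),
      by have := isTree_extG_single hT (QQ n); rwa [emb_QQ] at this⟩
  | .inr (.inr ⟨H, hle, hF⟩) => ⟨extG H {VA n, VB n},
      extG_le_strip hle le_rfl, isTree_extG_pair hF⟩

lemma Phi_bijective (n : ℕ) : Function.Bijective (Phi n) := by
  constructor
  · rintro (⟨H1, hle1, hT1⟩ | ⟨H1, hle1, hT1⟩ | ⟨H1, hle1, hF1⟩)
        (⟨H2, hle2, hT2⟩ | ⟨H2, hle2, hT2⟩ | ⟨H2, hle2, hF2⟩) h <;>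
      simp only [Phi, Subtype.mk.injEq] at h
    · obtain ⟨hH, _⟩ := extG_inj (last_not_mem_A n) (last_not_mem_A n) h
      simp [hH]
    · obtain ⟨_, hS⟩ := extG_inj (last_not_mem_A n) (last_not_mem_B n) h
      exact absurd (Set.singleton_eq_singleton_iff.mp hS) (VA_ne_VB n)
    · obtain ⟨_, hS⟩ := extG_inj (last_not_mem_A n) (last_not_mem_AB n) h
      have : VB n ∈ ({VA n} : Set (Fin (n + 3))) := hS ▸ (by simp)
      exact absurd (Set.mem_singleton_iff.mp this).symm (VA_ne_VB n)
    · obtain ⟨_, hS⟩ := extG_inj (last_not_mem_B n) (last_not_mem_A n) h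
      exact absurd (Set.singleton_eq_singleton_iff.mp hS).symm (VA_ne_VB n)
    · obtain ⟨hH, _⟩ := extG_inj (last_not_mem_B n) (last_not_mem_B n) h
      simp [hH]
    · obtain ⟨_, hS⟩ := extG_inj (last_not_mem_B n) (last_not_mem_AB n) h
      have : VA n ∈ ({VB n} : Set (Fin (n + 3))) := hS ▸ (by simp)
      exact absurd (Set.mem_singleton_iff.mp this) (VA_ne_VB n)
    · obtain ⟨_, hS⟩ := extG_inj (last_not_mem_AB n) (last_not_mem_A n) h
      have : VB n ∈ ({VA n} : Set (Fin (n + 3))) := hS ▸ (by simp)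
      exact absurd (Set.mem_singleton_iff.mp this).symm (VA_ne_VB n)
    · obtain ⟨_, hS⟩ := extG_inj (last_not_mem_AB n) (last_not_mem_B n) h
      have : VA n ∈ ({VB n} : Set (Fin (n + 3))) := hS ▸ (by simp)
      exact absurd (Set.mem_singleton_iff.mp this) (VA_ne_VB n)
    · obtain ⟨hH, _⟩ := extG_inj (last_not_mem_AB n) (last_not_mem_AB n) h
      simp [hH]
  · rintro ⟨H, hle, hT⟩
    rcases tree_nbr hT hle with hN | hN | hN
    · refine ⟨.inl ⟨H.comap (emb (n + 2)), comap_strip_le hle,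
        isTree_comap_single hT (PP n) (fun u => by rw [hN u, emb_PP])⟩, ?_⟩
      simp only [Phi, Subtype.mk.injEq]
      exact extG_recover (fun u => by rw [hN u, Set.mem_singleton_iff])
    · refine ⟨.inr (.inl ⟨H.comap (emb (n + 2)), comap_strip_le hle,
        isTree_comap_single hT (QQ n) (fun u => by rw [hN u, emb_QQ])⟩), ?_⟩
      simp only [Phi, Subtype.mk.injEq]
      exact extG_recover (fun u => by rw [hN u, Set.mem_singleton_iff])
    · refine ⟨.inr (.inr ⟨H.comap (emb (n + 2)), comap_strip_le hle,
        isTF_comap_pair hT hN⟩), ?_⟩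
      simp only [Phi, Subtype.mk.injEq]
      exact extG_recover hN

def Psi (n : ℕ) : TS (n + 2) ⊕ FS n → FS (n + 1)
  | .inl ⟨H, hle, hT⟩ => ⟨extG H ∅,
      extG_le_strip hle (Set.empty_subset _), isTF_extG_empty hT⟩
  | .inr ⟨H, hle, hF⟩ => ⟨extG H {VB n},
      extG_le_strip hle (by intro x hx; exact Or.inr hx), isTF_extG_B hF⟩

lemma Psi_bijective (n : ℕ) : Function.Bijective (Psi n) := by
  constructor
  · rintro (⟨H1, hle1, hT1⟩ | ⟨H1, hle1, hF1⟩) (⟨H2, hle2, hT2⟩ | ⟨H2, hle2, hF2⟩) h <;>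
      simp only [Psi, Subtype.mk.injEq] at h
    · obtain ⟨hH, _⟩ := extG_inj (Set.notMem_empty _) (Set.notMem_empty _) h
      simp [hH]
    · obtain ⟨_, hS⟩ := extG_inj (Set.notMem_empty _) (last_not_mem_B n) h
      exact absurd hS.symm (Set.singleton_ne_empty _)
    · obtain ⟨_, hS⟩ := extG_inj (last_not_mem_B n) (Set.notMem_empty _) h
      exact absurd hS (Set.singleton_ne_empty _)
    · obtain ⟨hH, _⟩ := extG_inj (last_not_mem_B n) (last_not_mem_B n) h
      simp [hH]
  · rintro ⟨H, hle, hF⟩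
    rcases TF_nbr hF hle with hN | hN
    · refine ⟨.inl ⟨H.comap (emb (n + 2)), comap_strip_le hle,
        isTree_comap_TF_empty hF hN⟩, ?_⟩
      simp only [Psi, Subtype.mk.injEq]
      exact extG_recover (fun u => iff_of_false (hN u) (Set.notMem_empty u))
    · refine ⟨.inr ⟨H.comap (emb (n + 2)), comap_strip_le hle,
        isTF_comap_TF_B hF hN⟩, ?_⟩
      simp only [Psi, Subtype.mk.injEq]
      exact extG_recover (fun u => by rw [hN u, Set.mem_singleton_iff])

lemma card_T_succ (n : ℕ) :
    Nat.card (TS (n + 3)) = 2 * Nat.card (TS (n + 2)) + Nat.card (FS n) := by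
  rw [← Nat.card_eq_of_bijective _ (Phi_bijective n), Nat.card_sum, Nat.card_sum]
  ring

lemma card_F_succ (n : ℕ) :
    Nat.card (FS (n + 1)) = Nat.card (TS (n + 2)) + Nat.card (FS n) := by
  rw [← Nat.card_eq_of_bijective _ (Psi_bijective n), Nat.card_sum]


/-! ### Base cases -/

lemma acyclic_of_two {G : SimpleGraph (Fin 2)} : G.IsAcyclic := by
  intro u c hc
  have h3 := hc.three_le_length
  have hnd := hc.support_nodup
  have hlen := hnd.length_le_card
  have h4 : c.support.length = c.length + 1 := c.length_support
  rw [List.length_tail, h4] at hlen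
  simp [Fintype.card_fin] at hlen
  omega

lemma fin2_cases (u : Fin 2) : u = ⟨0, by omega⟩ ∨ u = ⟨1, by omega⟩ := by
  rcases u with ⟨val, h⟩
  rw [Fin.ext_iff, Fin.ext_iff]
  simp only
  omega

lemma tree_two_adj {H : SimpleGraph (Fin 2)} (hT : H.IsTree) {u v : Fin 2} (huv : u ≠ v) :
    H.Adj u v := by
  have hr := hT.isConnected.preconnected u v
  obtain ⟨p⟩ := hr
  obtain ⟨w, hw, q, _⟩ := Walk.exists_eq_cons_of_ne huv p
  have hwu : w ≠ u := hw.ne'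
  have : w = v := by
    rcases fin2_cases u with rfl | rfl <;> rcases fin2_cases v with rfl | rfl <;>
      rcases fin2_cases w with rfl | rfl <;> simp_all [Fin.ext_iff]
  exact this ▸ hw

lemma strip2_tree : (strip 2).IsTree := by
  constructor
  · refine ⟨fun u v => ?_⟩
    by_cases huv : u = v
    · exact huv ▸ Reachable.refl u
    · refine Adj.reachable ?_
      rw [strip_adj]
      have h1 := u.isLt
      have h2 := v.isLt
      have h3 : u.val ≠ v.val := fun h => huv (Fin.ext h)
      omega
  · exact acyclic_of_two

lemma card_T2 : Nat.card (TS 2) = 1 := by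
  rw [Nat.card_eq_one_iff_unique]
  constructor
  · constructor
    rintro ⟨H1, _, hT1⟩ ⟨H2, _, hT2⟩
    have : H1 = H2 := by
      ext u v
      by_cases huv : u = v
      · simp [huv]
      · exact iff_of_true (tree_two_adj hT1 huv) (tree_two_adj hT2 huv)
    simp [this]
  · exact ⟨⟨strip 2, le_rfl, strip2_tree⟩⟩

lemma bot_isTF : IsTF 0 (⊥ : SimpleGraph (Fin 2)) := by
  refine ⟨acyclic_of_two, ?_, ?_⟩
  · intro h
    have := SimpleGraph.reachable_bot.mp h
    rw [Fin.ext_iff] at this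
    simp at this
  · intro u
    rcases fin2_cases u with rfl | rfl
    · exact Or.inr (Reachable.refl _)
    · exact Or.inl (Reachable.refl _)

lemma card_F0 : Nat.card (FS 0) = 1 := by
  rw [Nat.card_eq_one_iff_unique]
  constructor
  · constructor
    rintro ⟨H1, hle1, hF1⟩ ⟨H2, hle2, hF2⟩
    have hkey : ∀ (H : SimpleGraph (Fin 2)), IsTF 0 H → H = ⊥ := by
      intro H hF
      ext u v
      simp only [SimpleGraph.bot_adj, iff_false]
      intro hadj
      apply hF.2.1
      have huv : u ≠ v := hadj.ne
      rcases fin2_cases u with rfl | rfl <;> rcases fin2_cases v with rfl | rfl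
      · exact absurd rfl huv
      · exact hadj.symm.reachable
      · exact hadj.reachable
      · exact absurd rfl huv
    rw [Subtype.mk.injEq, hkey H1 hF1, hkey H2 hF2]
  · exact ⟨⟨⊥, bot_le, bot_isTF⟩⟩

lemma main_card (k : ℕ) :
    Nat.card (TS (k + 2)) = Nat.fib (2 * k + 2) ∧ Nat.card (FS k) = Nat.fib (2 * k + 1) := by
  induction k with
  | zero =>
    refine ⟨?_, ?_⟩
    · rw [card_T2]; norm_num
    · rw [card_F0]; norm_num
  | succ k ih =>
    have hT := card_T_succ k
    have hF := card_F_succ k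
    have e1 : Nat.fib (2 * k + 2 + 2) = Nat.fib (2 * k + 2) + Nat.fib (2 * k + 2 + 1) :=
      Nat.fib_add_two
    have e2 : Nat.fib (2 * k + 1 + 2) = Nat.fib (2 * k + 1) + Nat.fib (2 * k + 1 + 1) :=
      Nat.fib_add_two
    constructor
    · show Nat.card (TS (k + 3)) = Nat.fib (2 * (k + 1) + 2)
      rw [hT, ih.1, ih.2]
      have : 2 * (k + 1) + 2 = 2 * k + 2 + 2 := by ring
      rw [this, e1]
      have : 2 * k + 2 + 1 = 2 * k + 1 + 2 := by ring
      rw [this, e2]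
      have : 2 * k + 1 + 1 = 2 * k + 2 := by ring
      rw [this]
      ring
    · show Nat.card (FS (k + 1)) = Nat.fib (2 * (k + 1) + 1)
      rw [hF, ih.1, ih.2]
      have : 2 * (k + 1) + 1 = 2 * k + 1 + 2 := by ring
      rw [this, e2]
      have : 2 * k + 1 + 1 = 2 * k + 2 := by ring
      rw [this]
      ring

end STAux

/-- The number of spanning trees of the strip graph `S_n` is `F_{2n-2}`. -/
theorem numSpanningTrees_strip (n : ℕ) (hn : 2 ≤ n) :
    numSpanningTrees (strip n) = Nat.fib (2 * n - 2) := by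
  obtain ⟨k, rfl⟩ : ∃ k, n = k + 2 := ⟨n - 2, by omega⟩
  have he : 2 * (k + 2) - 2 = 2 * k + 2 := by omega
  rw [he]
  exact (STAux.main_card k).1
end
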